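/- arXiv:1711.03772 — 4 statements merged into one kernel-verified Lean document; each statement's English description precedes it below -/
import Mathlib

section
/- Let n = 2^k with k ≥ 2, identify the vertices of K_n with (Z/2)^k, and colour edge {a,b} by a+b. If T is a spanning tree of K_n all of whose edge colours are distinct (rainbow), then it is impossible that exactly two vertices of T have even degree and all other vertices have odd degree. In particular, this colouring of K_n contains no rainbow Hamilton path. -/
/-!
The colour of an edge is the sum of its endpoints, so the colours of the edges of any graph add
up to `∑ v, deg v • v`, which in characteristic 2 is the sum of the odd-degree vertices. A rainbow
spanning tree uses each of the `2^k - 1` nonzero colours exactly once, and for `k ≥ 2` these add up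
to `0`. If exactly `x` and `y` had even degree, the odd-degree vertices would sum to `x + y ≠ 0`.
Along a walk the colours telescope to the sum of the two ends, so a rainbow Hamilton path from `u`
to `w` would force `u + w = 0`, i.e. `u = w`.
-/

/-- The colouring of `K_{2^k}` on vertex set `(Z/2)^k` giving edge `{a,b}` the colour `a+b`. -/
def mmCol (k : ℕ) : Sym2 (Fin k → ZMod 2) → (Fin k → ZMod 2) :=
  Sym2.lift ⟨fun a b => a + b, fun a b => add_comm a b⟩

open Finset

/-- The value `t` of coordinate `i` is taken `|R| ^ (|ι| - 1)` times, a multiple of `|R|`, and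
`|R| • t = 0` by Lagrange. -/
theorem Fintype.sum_pi_eq_zero {ι R : Type*} [Fintype ι] [DecidableEq ι] [AddCommGroup R]
    [Fintype R] (hι : 1 < Fintype.card ι) : ∑ v : ι → R, v = 0 := by
  funext i
  have hrest : Fintype.card ({j // j ≠ i} → R) = Fintype.card R ^ (Fintype.card ι - 1) := by
    simp [Fintype.card_subtype_compl]
  obtain ⟨m, hm⟩ : ∃ m, Fintype.card ι - 1 = m + 1 :=
    ⟨_, (Nat.succ_pred_eq_of_pos (by omega)).symm⟩
  rw [Finset.sum_apply, ← (Equiv.funSplitAt i R).symm.sum_comp, Fintype.sum_prod_type]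
  simp only [Equiv.funSplitAt_symm_apply, dite_true, sum_const, card_univ, hrest, hm, pow_succ,
    mul_nsmul, card_nsmul_eq_zero, nsmul_zero, Pi.zero_apply]

theorem Finset.sum_eq_zero_of_card_eq_card_sub_one {G : Type*} [AddCommGroup G] [Fintype G]
    [DecidableEq G] (hG : ∑ x : G, x = 0) {s : Finset G} (hs0 : 0 ∉ s)
    (hs : #s = Fintype.card G - 1) : ∑ x ∈ s, x = 0 := by
  have hs_eq : s = univ.erase 0 := by
    refine eq_of_subset_of_card_le
      (fun x hx => mem_erase.2 ⟨ne_of_mem_of_not_mem hx hs0, mem_univ x⟩) ?_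
    rw [card_erase_of_mem (mem_univ 0), card_univ, hs]
  rw [hs_eq, sum_erase univ (a := (0 : G)) rfl, hG]

namespace ZModModule

variable {G : Type*} [AddCommGroup G] [Module (ZMod 2) G]

theorem nsmul_eq_zero_of_even {n : ℕ} (hn : Even n) (x : G) : n • x = 0 := by
  rw [← Nat.cast_smul_eq_nsmul (ZMod 2), ZMod.natCast_eq_zero_iff_even.2 hn, zero_smul]

theorem nsmul_eq_self_of_odd {n : ℕ} (hn : Odd n) (x : G) : n • x = x := by
  rw [← Nat.cast_smul_eq_nsmul (ZMod 2), ZMod.natCast_eq_one_iff_odd.2 hn, one_smul]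

theorem eq_of_add_eq_zero {x y : G} (h : x + y = 0) : x = y := by
  rwa [← sub_eq_add, sub_eq_zero] at h

end ZModModule

theorem SimpleGraph.sum_edgeFinset_lift_add {V M : Type*} [Fintype V] [DecidableEq V]
    [AddCommMonoid M] (G : SimpleGraph V) [DecidableRel G.Adj] (f : V → M) :
    ∑ e ∈ G.edgeFinset, Sym2.lift ⟨fun a b => f a + f b, fun _ _ => add_comm _ _⟩ e =
      ∑ v, G.degree v • f v := by
  have hedge : ∀ e ∈ G.edgeFinset, Sym2.lift ⟨fun a b => f a + f b, fun _ _ => add_comm _ _⟩ e =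
      ∑ v, if v ∈ e then f v else 0 := by
    intro e he
    induction e using Sym2.ind with
    | _ a b =>
      have hab : a ≠ b := G.ne_of_adj (mem_edgeFinset.1 he)
      rw [← sum_filter, show univ.filter (· ∈ s(a, b)) = {a, b} by ext; simp, sum_pair hab,
        Sym2.lift_mk]
  rw [sum_congr rfl hedge, sum_comm]
  refine sum_congr rfl fun v _ => ?_
  rw [← sum_filter, sum_const, ← incidenceFinset_eq_filter, card_incidenceFinset_eq_degree]

variable {k : ℕ}

@[simp]
theorem mmCol_mk (a b : Fin k → ZMod 2) : mmCol k s(a, b) = a + b := rfl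

theorem mmCol_ne_zero {e : Sym2 (Fin k → ZMod 2)} (he : ¬ e.IsDiag) : mmCol k e ≠ 0 := by
  induction e using Sym2.ind with
  | _ => exact fun h => he (Sym2.mk_isDiag_iff.2 (ZModModule.eq_of_add_eq_zero h))

theorem sum_univ_fin_zmod_two_eq_zero (hk : 2 ≤ k) : ∑ v : Fin k → ZMod 2, v = 0 :=
  Fintype.sum_pi_eq_zero (by simp only [Fintype.card_fin]; omega)

theorem SimpleGraph.IsTree.sum_odd_degree_eq_zero_of_injOn_mmCol (hk : 2 ≤ k)
    {T : SimpleGraph (Fin k → ZMod 2)} [DecidableRel T.Adj] (hT : T.IsTree)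
    (hrainbow : Set.InjOn (mmCol k) T.edgeSet) :
    ∑ v ∈ univ.filter (fun v => Odd (T.degree v)), v = 0 := by
  have hinj : Set.InjOn (mmCol k) T.edgeFinset := by simpa using hrainbow
  have hcolours : ∑ e ∈ T.edgeFinset, mmCol k e = 0 := by
    refine (sum_image (f := id) hinj).symm.trans
      (sum_eq_zero_of_card_eq_card_sub_one (sum_univ_fin_zmod_two_eq_zero hk) ?_ ?_)
    · simp only [mem_image, not_exists, not_and, mem_edgeFinset]
      exact fun e he => mmCol_ne_zero (T.not_isDiag_of_mem_edgeSet he)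
    · have := hT.card_edgeFinset
      rw [card_image_of_injOn hinj]
      omega
  have hdegree : ∑ e ∈ T.edgeFinset, mmCol k e = ∑ v, T.degree v • v :=
    T.sum_edgeFinset_lift_add id
  rw [← hcolours, hdegree, sum_filter]
  refine sum_congr rfl fun v _ => ?_
  split_ifs with h
  · exact (ZModModule.nsmul_eq_self_of_odd h v).symm
  · exact (ZModModule.nsmul_eq_zero_of_even (Nat.not_odd_iff_even.1 h) v).symm

theorem SimpleGraph.Walk.sum_map_mmCol_edges {G : SimpleGraph (Fin k → ZMod 2)}
    {u w : Fin k → ZMod 2} (p : G.Walk u w) : (p.edges.map (mmCol k)).sum = u + w := by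
  induction p with
  | nil => simp [ZModModule.add_self]
  | cons _ q ih =>
    rw [edges_cons, List.map_cons, List.sum_cons, ih, mmCol_mk, ZModModule.add_add_add_cancel]

theorem SimpleGraph.Walk.IsHamiltonian.not_nodup_map_mmCol_edges (hk : 2 ≤ k)
    {G : SimpleGraph (Fin k → ZMod 2)} {u w : Fin k → ZMod 2} {p : G.Walk u w}
    (hp : p.IsHamiltonian) : ¬ (p.edges.map (mmCol k)).Nodup := by
  intro hnodup
  have hlength : p.length = Fintype.card (Fin k → ZMod 2) - 1 := hp.length_eq
  have hne : u ≠ w := by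
    rintro rfl
    rw [length_eq_zero_iff.2 (isPath_iff_nil.1 hp.isPath)] at hlength
    simp only [Fintype.card_pi, ZMod.card, prod_const, card_univ, Fintype.card_fin] at hlength
    have := Nat.one_lt_two_pow (n := k) (by omega)
    omega
  have hzero : (p.edges.map (mmCol k)).sum = 0 := by
    have hsum_toFinset := List.sum_toFinset id hnodup
    rw [List.map_id] at hsum_toFinset
    rw [← hsum_toFinset]
    refine sum_eq_zero_of_card_eq_card_sub_one (sum_univ_fin_zmod_two_eq_zero hk) ?_ ?_
    · simp only [List.mem_toFinset, List.mem_map, not_exists, not_and]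
      exact fun e he => mmCol_ne_zero (G.not_isDiag_of_mem_edgeSet (p.edges_subset_edgeSet he))
    · rw [List.toFinset_card_of_nodup hnodup, List.length_map, length_edges, hlength]
  exact hne (ZModModule.eq_of_add_eq_zero (p.sum_map_mmCol_edges ▸ hzero))

theorem stmt5 (k : ℕ) (hk : 2 ≤ k)
    (T : SimpleGraph (Fin k → ZMod 2)) [DecidableRel T.Adj] (hT : T.IsTree)
    (hrainbow : Set.InjOn (mmCol k) T.edgeSet) :
    (¬ ∃ x y : Fin k → ZMod 2, x ≠ y ∧ Even (T.degree x) ∧ Even (T.degree y) ∧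
        ∀ v, v ≠ x → v ≠ y → Odd (T.degree v)) ∧
    (∀ (u w : Fin k → ZMod 2) (p : (⊤ : SimpleGraph (Fin k → ZMod 2)).Walk u w),
        p.IsHamiltonian → ¬ (p.edges.map (mmCol k)).Nodup) := by
  refine ⟨?_, fun u w p hp => hp.not_nodup_map_mmCol_edges hk⟩
  rintro ⟨x, y, hxy, hx, hy, hodd⟩
  have hodd_set : univ.filter (fun v => Odd (T.degree v)) = {x, y}ᶜ := by
    ext v
    simp only [mem_filter_univ, mem_compl, mem_insert, mem_singleton, not_or]
    refine ⟨fun hv => ⟨?_, ?_⟩, fun hv => hodd v hv.1 hv.2⟩ <;> rintro rfl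
    exacts [Nat.not_odd_iff_even.2 hx hv, Nat.not_odd_iff_even.2 hy hv]
  have hsum := sum_compl_add_sum {x, y} (id : (Fin k → ZMod 2) → _)
  rw [sum_pair hxy] at hsum
  simp only [id, ← hodd_set, hT.sum_odd_degree_eq_zero_of_injOn_mmCol hk hrainbow, zero_add,
    sum_univ_fin_zmod_two_eq_zero hk] at hsum
  exact hxy (ZModModule.eq_of_add_eq_zero hsum)
end

section
/- Let n = 2k ≥ 4 and let S be a tree on n vertices containing two non-adjacent vertices x, y such that every edge of S is incident to x or to y. Then for every 1-factorisation c of K_n and every embedding of S into K_n, the embedded copy of S is not rainbow. In other words, S has no rainbow embedding into any properly 1-factorised K_n. -/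
theorem stmt7 (k n : ℕ) (hn : n = 2 * k) (h4 : 4 ≤ n)
    (S : SimpleGraph (Fin n)) (hS : S.IsTree)
    (x y : Fin n) (hxy : x ≠ y) (hnadj : ¬ S.Adj x y)
    (hcov : ∀ e ∈ S.edgeSet, x ∈ e ∨ y ∈ e)
    -- a 1-factorisation of K_n: a proper colouring with n-1 colours whose
    -- colour classes are perfect matchings
    (c : Sym2 (Fin n) → Fin (n - 1))
    (hproper : ∀ a b b' : Fin n, b ≠ a → b' ≠ a → b ≠ b' → c s(a, b) ≠ c s(a, b'))
    (hfactor : ∀ (f : Fin (n - 1)) (a : Fin n), ∃! b, b ≠ a ∧ c s(a, b) = f)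
    -- an embedding of S into K_n
    (φ : Fin n → Fin n) (hφ : Function.Injective φ) :
    ¬ Set.InjOn (fun e => c (e.map φ)) S.edgeSet := by
  classical
  intro hinj
  set f0 := c s(φ x, φ y) with hf0
  have hcard : S.edgeFinset.card = n - 1 := by
    have := hS.card_edgeFinset
    simp only [Fintype.card_fin] at this
    omega
  have himg : S.edgeFinset.image (fun e => c (e.map φ)) = Finset.univ := by
    apply Finset.eq_univ_of_card
    rw [Finset.card_image_of_injOn (by simpa using hinj), hcard, Fintype.card_fin]
  have hf0mem : f0 ∈ S.edgeFinset.image (fun e => c (e.map φ)) := by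
    rw [himg]; exact Finset.mem_univ _
  obtain ⟨e, he, heq⟩ := Finset.mem_image.mp hf0mem
  have he' : e ∈ S.edgeSet := SimpleGraph.mem_edgeFinset.mp he
  rcases hcov e he' with hx | hy
  · obtain ⟨w, rfl⟩ : ∃ w, e = s(x, w) := ⟨Sym2.Mem.other hx, (Sym2.other_spec hx).symm⟩
    have hadj : S.Adj x w := S.mem_edgeSet.mp he'
    have heq' : c s(φ x, φ w) = f0 := by simpa using heq
    obtain ⟨b, _, hbu⟩ := hfactor f0 (φ x)
    have h1 : φ w = b := hbu (φ w) ⟨fun h => hadj.ne' (hφ h), heq'⟩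
    have h2 : φ y = b := hbu (φ y) ⟨fun h => hxy.symm (hφ h), rfl⟩
    have : w = y := hφ (h1.trans h2.symm)
    exact hnadj (this ▸ hadj)
  · obtain ⟨w, rfl⟩ : ∃ w, e = s(y, w) := ⟨Sym2.Mem.other hy, (Sym2.other_spec hy).symm⟩
    have hadj : S.Adj y w := S.mem_edgeSet.mp he'
    have heq' : c s(φ y, φ w) = f0 := by simpa using heq
    have hf0' : c s(φ y, φ x) = f0 := by rw [hf0, Sym2.eq_swap]
    obtain ⟨b, _, hbu⟩ := hfactor f0 (φ y)
    have h1 : φ w = b := hbu (φ w) ⟨fun h => hadj.ne' (hφ h), heq'⟩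
    have h2 : φ x = b := hbu (φ x) ⟨fun h => hxy (hφ h), hf0'⟩
    have : w = x := hφ (h1.trans h2.symm)
    exact hnadj ((this ▸ hadj).symm)
end

section
/- In a properly edge-coloured digraph G on n vertices with minimum in-degree at least (1−δ)n, let P be a rainbow path forest using a set of colours C(P) with |C(P)| ≤ (1−3δ)n, let Q be a set of 1/δ vertices, and let C ⊇ C(G)\C(P) be a set of colours with |C| − |C(G)\C(P)| = Aδn. Then the number of vertices v with at least 2 edges from v to Q having colours in C is at least (A+1)δn. -/
/-!
Let `D = C(G) \ Cset`. As `Cset ⊆ C(G)` has `Aδn` more colours than `C(G) \ C(P)`,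
`|D| = |C(G)| - |Cset| ≤ |C(P)| - Aδn ≤ (1 - 3δ - Aδ)n`. The in-edges of a vertex are rainbow, so
at most `|D|` of them have a colour in `D`, and every `q ∈ Q` receives at least
`(1 - δ)n - |D| ≥ (A + 2)δn` edges with colours in `Cset`: at least `(A + 2)n` such edges in all.
Counted by their tails, a vertex sends at most one of them unless it lies in the set `V` of
vertices sending two, and then at most `|Q| = 1/δ`; hence `(A + 2)n ≤ n + |V|/δ`.
-/

open Finset

lemma card_sdiff_add_card_le_card_sdiff_add_card {β : Type*} [DecidableEq β] {s t : Finset β}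
    (u : Finset β) (hts : t ⊆ s) : #(s \ t) + #t ≤ #(s \ u) + #u := by
  rw [card_sdiff_add_card_eq_card hts]
  exact card_le_card_sdiff_add_card

lemma card_le_card_filter_add_card_image_sdiff {α β : Type*} [DecidableEq β] {s t : Finset α}
    {f : α → β} (hf : Set.InjOn f s) (hst : s ⊆ t) (S : Finset β) :
    #s ≤ #{x ∈ s | f x ∈ S} + #(t.image f \ S) := by
  rw [← card_filter_add_card_filter_not (fun x => f x ∈ S)]
  gcongr
  rw [← card_image_of_injOn (hf.mono (filter_subset _ _))]
  refine card_le_card fun c hc => ?_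
  obtain ⟨x, hx, rfl⟩ := mem_image.1 hc
  rw [mem_filter] at hx
  exact mem_sdiff.2 ⟨mem_image_of_mem f (hst hx.1), hx.2⟩

section Digraph

variable {V W : Type*}

lemma injOn_filter_snd_eq_of_proper {C : Type*} [DecidableEq V] {E : Finset (V × V)}
    {col : V × V → C}
    (hproper : ∀ e ∈ E, ∀ f ∈ E, e ≠ f → (e.1 = f.1 ∨ e.2 = f.2) → col e ≠ col f) (v : V) :
    Set.InjOn col ↑{e ∈ E | e.2 = v} := by
  intro e he f hf hef
  simp only [coe_filter, Set.mem_ofPred_eq] at he hf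
  by_contra hne
  exact hproper e he.1 f hf.1 hne (Or.inr (he.2.trans hf.2.symm)) hef

lemma card_filter_snd_eq_le_of_proper {C : Type*} [DecidableEq V] [DecidableEq C]
    {E : Finset (V × V)} {col : V × V → C}
    (hproper : ∀ e ∈ E, ∀ f ∈ E, e ≠ f → (e.1 = f.1 ∨ e.2 = f.2) → col e ≠ col f)
    {Q : Finset V} (S : Finset C) {q : V} (hq : q ∈ Q) :
    #{e ∈ E | e.2 = q} ≤ #{e ∈ {e ∈ E | e.2 ∈ Q ∧ col e ∈ S} | e.2 = q} + #(E.image col \ S) := by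
  refine (card_le_card_filter_add_card_image_sdiff (injOn_filter_snd_eq_of_proper hproper q)
    (filter_subset _ E) S).trans (Nat.add_le_add_right (card_le_card fun e he => ?_) _)
  simp only [mem_filter] at he ⊢
  exact ⟨⟨he.1.1, he.1.2 ▸ hq, he.2⟩, he.1.2⟩

lemma card_mul_le_card_of_le_card_filter_snd_eq [DecidableEq W] {F : Finset (V × W)}
    {Q : Finset W} (hF : ∀ e ∈ F, e.2 ∈ Q) {m : ℝ} (hm : ∀ q ∈ Q, m ≤ #{e ∈ F | e.2 = q}) :
    #Q * m ≤ #F := by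
  rw [card_eq_sum_card_fiberwise hF, Nat.cast_sum, ← nsmul_eq_mul]
  exact card_nsmul_le_sum Q _ m hm

lemma card_filter_fst_eq_le [DecidableEq V] {F : Finset (V × W)} {Q : Finset W}
    (hF : ∀ e ∈ F, e.2 ∈ Q) (v : V) : #{e ∈ F | e.1 = v} ≤ #Q :=
  card_le_card_of_injOn Prod.snd (fun e he => hF e (mem_filter.1 he).1)
    fun _ he _ hf h => Prod.ext ((mem_filter.1 he).2.trans (mem_filter.1 hf).2.symm) h

lemma card_le_card_filter_two_le_mul_add [Fintype V] [DecidableEq V] {F : Finset (V × W)}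
    {Q : Finset W} (hF : ∀ e ∈ F, e.2 ∈ Q) :
    #F ≤ #{v | 2 ≤ #{e ∈ F | e.1 = v}} * #Q + Fintype.card V := by
  calc #F = ∑ v, #{e ∈ F | e.1 = v} := card_eq_sum_card_fiberwise fun e _ => mem_univ e.1
    _ ≤ ∑ v, if 2 ≤ #{e ∈ F | e.1 = v} then #Q else 1 := by
        gcongr with v
        split_ifs with h
        · exact card_filter_fst_eq_le hF v
        · omega
    _ = #{v | 2 ≤ #{e ∈ F | e.1 = v}} * #Q + #{v | ¬2 ≤ #{e ∈ F | e.1 = v}} := by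
        rw [sum_ite, sum_const, sum_const, smul_eq_mul, smul_eq_mul, mul_one]
    _ ≤ _ := by
        gcongr
        exact card_le_univ _

end Digraph

theorem stmt15_general (n : ℕ) (C : Type*) [DecidableEq C] (δ A : ℝ) (hδ : 0 < δ)
    (E P : Finset (Fin n × Fin n))
    (col : Fin n × Fin n → C)
    -- proper colouring of the digraph G
    (hproper : ∀ e ∈ E, ∀ f ∈ E, e ≠ f → (e.1 = f.1 ∨ e.2 = f.2) → col e ≠ col f)
    -- minimum in-degree at least (1-δ)n
    (hindeg : ∀ v : Fin n, (1 - δ) * n ≤ ((E.filter (fun e => e.2 = v)).card : ℝ))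
    -- P is a rainbow path forest with |C(P)| ≤ (1-3δ)n
    (hCP : ((P.image col).card : ℝ) ≤ (1 - 3 * δ) * n)
    -- Q is a set of 1/δ vertices
    (Q : Finset (Fin n)) (hQ : (Q.card : ℝ) = 1 / δ)
    -- Cset ⊇ C(G) \ C(P) is a set of colours of G with |Cset| - |C(G)\C(P)| = Aδn
    (Cset : Finset C) (hCsub : Cset ⊆ E.image col)
    (hA : (Cset.card : ℝ) - (((E.image col) \ (P.image col)).card : ℝ) = A * δ * n) :
    (A + 1) * δ * n ≤
      ((Finset.univ.filter (fun v : Fin n =>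
          2 ≤ (E.filter (fun e => e.1 = v ∧ e.2 ∈ Q ∧ col e ∈ Cset)).card)).card : ℝ) := by
  set F := {e ∈ E | e.2 ∈ Q ∧ col e ∈ Cset}
  have hFQ : ∀ e ∈ F, e.2 ∈ Q := fun e he => (mem_filter.1 he).2.1
  have hD : (#(E.image col \ Cset) : ℝ) + #Cset
      ≤ #(E.image col \ P.image col) + #(P.image col) := by
    exact_mod_cast card_sdiff_add_card_le_card_sdiff_add_card (P.image col) hCsub
  have hin : ∀ q ∈ Q, (A + 2) * δ * n ≤ #{e ∈ F | e.2 = q} := by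
    intro q hq
    have : (#{e ∈ E | e.2 = q} : ℝ) ≤ #{e ∈ F | e.2 = q} + #(E.image col \ Cset) := by
      exact_mod_cast card_filter_snd_eq_le_of_proper hproper Cset hq
    linarith [hindeg q]
  have hlower : (A + 2) * n ≤ #F := by
    have := card_mul_le_card_of_le_card_filter_snd_eq hFQ hin
    rwa [hQ, show 1 / δ * ((A + 2) * δ * n) = (A + 2) * n by field_simp] at this
  set V := univ.filter (fun v => 2 ≤ #{e ∈ E | e.1 = v ∧ e.2 ∈ Q ∧ col e ∈ Cset})
  have hupper : (#F : ℝ) ≤ #V * (1 / δ) + n := by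
    have hV : univ.filter (fun v => 2 ≤ #{e ∈ F | e.1 = v}) = V := by
      simp only [F, V, filter_filter, and_comm]
    have := card_le_card_filter_two_le_mul_add hFQ
    rw [hV, Fintype.card_fin] at this
    rw [← hQ]
    exact_mod_cast this
  have key : (A + 1) * n ≤ #V * (1 / δ) := by linarith
  calc (A + 1) * δ * n = δ * ((A + 1) * n) := by ring
    _ ≤ δ * (#V * (1 / δ)) := mul_le_mul_of_nonneg_left key hδ.le
    _ = #V := by field_simp

theorem stmt15 (n : ℕ) (C : Type*) [DecidableEq C] (δ A : ℝ) (hδ : 0 < δ)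
    (E P : Finset (Fin n × Fin n)) (hPE : P ⊆ E)
    (col : Fin n × Fin n → C)
    -- proper colouring of the digraph G
    (hproper : ∀ e ∈ E, ∀ f ∈ E, e ≠ f → (e.1 = f.1 ∨ e.2 = f.2) → col e ≠ col f)
    -- minimum in-degree at least (1-δ)n
    (hindeg : ∀ v : Fin n, (1 - δ) * n ≤ ((E.filter (fun e => e.2 = v)).card : ℝ))
    -- P is a rainbow path forest with |C(P)| ≤ (1-3δ)n
    (hPrainbow : Set.InjOn col ↑P)
    (hCP : ((P.image col).card : ℝ) ≤ (1 - 3 * δ) * n)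
    -- Q is a set of 1/δ vertices
    (Q : Finset (Fin n)) (hQ : (Q.card : ℝ) = 1 / δ)
    -- Cset ⊇ C(G) \ C(P) is a set of colours of G with |Cset| - |C(G)\C(P)| = Aδn
    (Cset : Finset C) (hCsub : Cset ⊆ E.image col)
    (hC0 : (E.image col) \ (P.image col) ⊆ Cset)
    (hA : (Cset.card : ℝ) - (((E.image col) \ (P.image col)).card : ℝ) = A * δ * n) :
    (A + 1) * δ * n ≤
      ((Finset.univ.filter (fun v : Fin n =>
          2 ≤ (E.filter (fun e => e.1 = v ∧ e.2 ∈ Q ∧ col e ∈ Cset)).card)).card : ℝ) :=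
  stmt15_general n C δ A hδ E P col hproper hindeg hCP Q hQ Cset hCsub hA
end

section
/- Let P₁ be a directed path v_1 → v_2 → ... → v_m in an edge-coloured graph, and suppose there are indices 2 ≤ k ≤ a < m and auxiliary directed edges e = v_a v_1 and e' = v_{k-1} v_{a+1} whose colours are distinct from each other and from all colours on P₁. Then the directed walk v_k → v_{k+1} → ... → v_a → v_1 → v_2 → ... → v_{k-1} → v_{a+1} → ... → v_m is a directed path on exactly the vertex set {v_1,...,v_m}, and if P₁ was rainbow then this rotated path is also rainbow. -/
/-!
The rotated walk is `v` applied to a rearrangement of the index list `[1, …, m]` into three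
blocks `[k, a]`, `[1, k - 1]`, `[a + 1, m]`; being a permutation, it has distinct vertices
and the same vertex set as `P₁`. Its edges are the path edges `(i, i + 1)` inside the blocks,
which form a sub-list of the edges of `P₁`, together with the two junction edges `(a, 1)` and
`(k - 1, a + 1)`, which are the auxiliary edges `e` and `e'`.
-/

open List

section WalkEdges

variable {α β : Type*}

def walkEdges (l : List α) : List (α × α) := l.zip l.tail

lemma walkEdges_map (f : α → β) (l : List α) :
    walkEdges (l.map f) = (walkEdges l).map (Prod.map f f) := by
  simp [walkEdges, ← map_tail, zip_map]

lemma walkEdges_range' (s n : ℕ) :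
    walkEdges (range' s (n + 1)) = (range' s n).map fun i => (i, i + 1) := by
  induction n generalizing s with
  | zero => rfl
  | succ n ih => simpa [walkEdges, range'_succ] using ih (s + 1)

lemma walkEdges_range'_append (s n y : ℕ) (l : List ℕ) :
    walkEdges (range' s (n + 1) ++ y :: l)
      = (range' s n).map (fun i => (i, i + 1)) ++ (s + n, y) :: walkEdges (y :: l) := by
  induction n generalizing s with
  | zero => rfl
  | succ n ih =>
    simpa [walkEdges, range'_succ, Nat.add_right_comm _ 1, Nat.add_assoc] using ih (s + 1)

end WalkEdges

lemma nodup_append_cons_append_cons_iff {α : Type*} {l₁ l₂ l₃ : List α} {x y : α} :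
    (l₁ ++ x :: (l₂ ++ y :: l₃)).Nodup ↔ (x :: y :: (l₁ ++ l₂ ++ l₃)).Nodup := by
  refine Perm.nodup_iff (perm_middle.trans (Perm.cons _ ?_))
  rw [← append_assoc]
  exact perm_middle

lemma nodup_cons_cons_map_of_subset {α β : Type*} {f : α → β} {l l' : List α} {x y : β}
    (hl' : l'.Nodup) (hsub : l' ⊆ l) (hl : (l.map f).Nodup) (hxy : x ≠ y)
    (hx : ∀ i ∈ l, x ≠ f i) (hy : ∀ i ∈ l, y ≠ f i) : (x :: y :: l'.map f).Nodup := by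
  have hmem : ∀ z ∈ l'.map f, ∃ i ∈ l, f i = z := fun z hz => by
    obtain ⟨i, hi, rfl⟩ := mem_map.1 hz
    exact ⟨i, hsub hi, rfl⟩
  refine nodup_cons.2 ⟨?_, nodup_cons.2 ⟨?_, hl'.map_on fun i hi j hj =>
    inj_on_of_nodup_map hl (hsub hi) (hsub hj)⟩⟩
  · rintro (_ | ⟨_, hz⟩)
    · exact hxy rfl
    · obtain ⟨i, hi, hfi⟩ := hmem x hz
      exact hx i hi hfi.symm
  · intro hz
    obtain ⟨i, hi, hfi⟩ := hmem y hz
    exact hy i hi hfi.symm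

def rotationIndices (m k a : ℕ) : List ℕ :=
  range' k (a - k + 1) ++ range' 1 (k - 1) ++ range' (a + 1) (m - a)

lemma rotationIndices_perm {m k a : ℕ} (hk : 1 ≤ k) (hka : k ≤ a) (ham : a ≤ m) :
    (rotationIndices m k a).Perm (range' 1 m) := by
  have hsplit : range' 1 (k - 1) ++ range' k (a - k + 1) ++ range' (a + 1) (m - a)
      = range' 1 m := by
    have hinit : range' 1 (k - 1) ++ range' k (a - k + 1) = range' 1 a := by
      convert range'_append_1 (s := 1) (m := k - 1) (n := a - k + 1) using 3 <;> omega
    rw [hinit]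
    convert range'_append_1 (s := 1) (m := a) (n := m - a) using 3 <;> omega
  rw [← hsplit]
  exact perm_append_comm.append_right _

lemma rotationIndices_sublist (m k a : ℕ) :
    (range' k (a - k) ++ range' 1 (k - 2) ++ range' (a + 1) (m - a - 1)) <+
      rotationIndices m k a :=
  ((range'_sublist_right.2 (by omega)).append (range'_sublist_right.2 (by omega))).append
    (range'_sublist_right.2 (by omega))

lemma walkEdges_rotationIndices {m k a : ℕ} (hk : 2 ≤ k) (hka : k ≤ a) (ham : a < m) :
    walkEdges (rotationIndices m k a)
      = (range' k (a - k)).map (fun i => (i, i + 1)) ++ (a, 1) ::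
        ((range' 1 (k - 2)).map (fun i => (i, i + 1)) ++ (k - 1, a + 1) ::
          (range' (a + 1) (m - a - 1)).map (fun i => (i, i + 1))) := by
  obtain ⟨p, rfl⟩ : ∃ p, k = p + 2 := ⟨k - 2, by omega⟩
  obtain ⟨q, rfl⟩ : ∃ q, a = p + 2 + q := ⟨a - (p + 2), by omega⟩
  obtain ⟨r, rfl⟩ : ∃ r, m = p + 2 + q + 1 + r := ⟨m - (p + 2 + q + 1), by omega⟩
  have hr : p + 2 + q + 1 + r - (p + 2 + q) = r + 1 := by omega
  simp only [rotationIndices, Nat.add_sub_cancel_left, Nat.add_sub_cancel, hr, append_assoc,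
    show p + 2 - 1 = p + 1 by omega]
  rw [range'_succ (s := 1), cons_append, walkEdges_range'_append, ← cons_append, ← range'_succ,
    range'_succ (s := p + 2 + q + 1), walkEdges_range'_append, ← range'_succ, walkEdges_range',
    Nat.add_comm 1 p]

theorem stmt16 {V C : Type*} [DecidableEq V]
    (m k a : ℕ) (hk : 2 ≤ k) (hka : k ≤ a) (ham : a < m)
    (v : ℕ → V) (hinj : Set.InjOn v (Set.Icc 1 m))
    (c : V × V → C)
    -- the two auxiliary edges have distinct colours ...
    (hee' : c (v a, v 1) ≠ c (v (k - 1), v (a + 1)))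
    -- ... distinct from all the colours on P₁
    (he : ∀ i, 1 ≤ i → i < m → c (v a, v 1) ≠ c (v i, v (i + 1)))
    (he' : ∀ i, 1 ≤ i → i < m → c (v (k - 1), v (a + 1)) ≠ c (v i, v (i + 1))) :
    -- the rotated walk  v_k → ... → v_a → v_1 → ... → v_{k-1} → v_{a+1} → ... → v_m
    let w : List V := ((List.range' k (a - k + 1)).map v) ++
        ((List.range' 1 (k - 1)).map v) ++ ((List.range' (a + 1) (m - a)).map v)
    -- is a directed path on exactly the vertices of P₁ ...
    w.Nodup ∧ w.toFinset = ((List.range' 1 m).map v).toFinset ∧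
    -- ... and if P₁ was rainbow then the rotated path is rainbow
    (((List.range' 1 (m - 1)).map (fun i => c (v i, v (i + 1)))).Nodup →
      ((w.zip w.tail).map c).Nodup) := by
  intro w
  have hw : w = (rotationIndices m k a).map v := by simp only [w, rotationIndices, map_append]
  have hperm := rotationIndices_perm (by omega) hka ham.le
  have hwperm : w.Perm ((range' 1 m).map v) := hw ▸ hperm.map v
  have hpath : ((range' 1 m).map v).Nodup :=
    (nodup_map_iff_inj_on nodup_range').2 fun i hi j hj =>
      hinj (by rw [mem_range'_1] at hi; exact ⟨hi.1, by omega⟩)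
        (by rw [mem_range'_1] at hj; exact ⟨hj.1, by omega⟩)
  refine ⟨hwperm.nodup_iff.2 hpath, by ext; simp [hwperm.mem_iff], fun hrainbow => ?_⟩
  change ((walkEdges w).map c).Nodup
  rw [hw, walkEdges_map, walkEdges_rotationIndices hk hka ham]
  simp only [map_append, map_cons, map_map, Function.comp_def, Prod.map]
  rw [nodup_append_cons_append_cons_iff, ← map_append, ← map_append]
  have hidx : (rotationIndices m k a).Nodup := hperm.nodup_iff.2 nodup_range'
  refine nodup_cons_cons_map_of_subset ((rotationIndices_sublist m k a).nodup hidx)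
    (fun i hi => ?_) hrainbow hee' (fun i hi => he i ?_ ?_) (fun i hi => he' i ?_ ?_)
  all_goals simp only [mem_append, mem_range'_1] at hi ⊢; omega
end
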